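/- arXiv:1404.1541 — 3 statements merged into one kernel-verified Lean document; each statement's English description precedes it below -/
import Mathlib

section
/- Let (R,m) be a Noetherian local ring and φ : R → R a local endomorphism of finite length. The sequence aₙ = log(length_R(R/φⁿ(m)R)) is subadditive: a_{n+k} ≤ aₙ + a_k for all n, k ≥ 1; consequently the limit h_loc(φ) = lim_{n→∞} (1/n) log(length_R(R/φⁿ(m)R)) exists and is a nonnegative real number. -/
/-!
If `J` is an ideal of finite colength in a local ring `(R, m)` and `x ∉ J` satisfies `m x ⊆ J`,
then passing from `J` to `J + (x)` lowers `ℓ_R(R/J)` by one, while for any ring map `f : R → S`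
it lowers `ℓ_S(S/JS)` by at most `ℓ_S(S/mS)`: the difference is the length of the cyclic module
`(JS + f(x)S)/JS`, which is killed by `mS`. Induction on `ℓ_R(R/J)` gives
`ℓ_S(S/JS) ≤ ℓ_R(R/J) · ℓ_S(S/mS)`. Taking `S = R`, `f = φⁿ` and `J = φᵏ(m)R` shows that
`n ↦ ℓ(R/φⁿ(m)R)` is submultiplicative, so its logarithm is subadditive and Fekete's lemma
gives the limit.
-/

open IsLocalRing Ideal Filter

/-- The length of a module, defined as the Krull dimension (longest chain length) of its
lattice of submodules; for modules of finite length this is the usual length. -/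
noncomputable def flen (A : Type*) [Ring A] (M : Type*) [AddCommGroup M] [Module A M] : ℕ :=
  (WithBot.unbotD 0 (Order.krullDim (Submodule A M))).toNat

/-- The entropy sequence `n ↦ (1/n) log length_A (A / σⁿ(𝔞)A)` of a local endomorphism `σ`
of a local ring `(A,𝔞)`; here `σ ^ n` is the `n`-fold composite of `σ`. -/
noncomputable def entSeq (A : Type*) [CommRing A] [IsLocalRing A] (σ : A →+* A) (n : ℕ) : ℝ :=
  Real.log (flen A (A ⧸ Ideal.map (σ ^ n) (maximalIdeal A))) / n

open Module Submodule

theorem flen_eq_toNat_length (A : Type*) [Ring A] (M : Type*) [AddCommGroup M] [Module A M] :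
    flen A M = (length A M).toNat := by
  rw [flen, ← coe_length, WithBot.unbotD_coe]

theorem flen_pos {A M : Type*} [Ring A] [AddCommGroup M] [Module A M] [Nontrivial M]
    (h : IsFiniteLength A M) : 0 < flen A M := by
  rw [flen_eq_toNat_length, Nat.pos_iff_ne_zero, ne_eq, ENat.toNat_eq_zero]
  exact not_or.mpr ⟨length_pos.ne', length_ne_top_iff.mpr h⟩

theorem Ideal.radical_map_radical {R S : Type*} [CommRing R] [CommRing S] (f : R →+* S)
    (I : Ideal R) : (I.radical.map f).radical = (I.map f).radical :=
  le_antisymm ((radical_mono (map_radical_le f)).trans (radical_idem _).le)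
    (radical_mono (map_mono le_radical))

theorem Ideal.radical_map_pow_eq_self {R : Type*} [CommRing R] {φ : R →+* R} {P : Ideal R}
    (h : (P.map φ).radical = P) (n : ℕ) : (P.map (φ ^ n)).radical = P := by
  induction n with
  | zero =>
    change (P.map (RingHom.id R)).radical = P
    rw [map_id, ← h, radical_idem]
  | succ n ih => rw [pow_succ', RingHom.mul_def, ← map_map, ← radical_map_radical, ih, h]

theorem isFiniteLength_quotient_of_radical_eq_maximalIdeal {R : Type*} [CommRing R]
    [IsNoetherianRing R] [IsLocalRing R] {I : Ideal R} (h : I.radical = maximalIdeal R) :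
    IsFiniteLength R (R ⧸ I) := by
  have : IsArtinianRing (R ⧸ I) := quotient_artinian_of_mem_minimalPrimes_of_isLocalRing I <| by
    rw [← radical_minimalPrimes, h, minimalPrimes_eq_subsingleton_self]
    rfl
  rw [isFiniteLength_iff_isNoetherian_isArtinian]
  exact ⟨isNoetherian_quotient I,
    isArtinian_of_surjective_algebraMap (Ideal.Quotient.mk_surjective (I := I))⟩

theorem exists_isAtom_span_singleton (R : Type*) [Ring R] (M : Type*) [AddCommGroup M]
    [Module R M] [IsArtinian R M] [Nontrivial M] : ∃ y : M, IsAtom (span R {y}) := by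
  obtain ⟨A, hA, -⟩ := (eq_bot_or_exists_atom_le (⊤ : Submodule R M)).resolve_left bot_ne_top.symm
  obtain ⟨y, hyA, hy⟩ := exists_mem_ne_zero_of_ne_bot hA.1
  refine ⟨y, ?_⟩
  convert hA
  exact (hA.le_iff.mp ((span_singleton_le_iff_mem y A).mpr hyA)).resolve_left
    (by rwa [Submodule.span_singleton_eq_bot])

section Length

variable {S M : Type*} [CommRing S] [AddCommGroup M] [Module S M]

theorem torsionOf_eq_maximalIdeal_of_isAtom [IsLocalRing S] {y : M} (h : IsAtom (span S {y})) :
    torsionOf S M y = maximalIdeal S := by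
  have : IsSimpleModule S (span S {y}) := isSimpleModule_iff_isAtom.mpr h
  have : IsSimpleModule S (S ⧸ torsionOf S M y) :=
    IsSimpleModule.congr (quotTorsionOfEquivSpanSingleton S M y)
  exact eq_maximalIdeal (isMaximal_def.mpr (isSimpleModule_iff_isCoatom.mp this))

theorem length_span_singleton_le {I : Ideal S} {y : M} (h : I ≤ torsionOf S M y) :
    length S (span S {y}) ≤ length S (S ⧸ I) := by
  rw [← (quotTorsionOfEquivSpanSingleton S M y).length_eq]
  exact length_le_of_surjective _ (factor_surjective h)

theorem length_quotient_eq_length_span_add (I : Ideal S) (y : S) :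
    length S (S ⧸ I) =
      length S (span S {Ideal.Quotient.mk I y}) + length S (S ⧸ (I ⊔ Ideal.span {y})) := by
  set N := span S {Ideal.Quotient.mk I y}
  have hN : N = Submodule.map I.mkQ (I ⊔ Ideal.span {y}) := by
    rw [Submodule.map_sup, mkQ_map_self, bot_sup_eq, Submodule.map_span, Set.image_singleton]
    rfl
  rw [length_eq_add_of_exact N.subtype N.mkQ N.injective_subtype N.mkQ_surjective
    (LinearMap.exact_subtype_mkQ N), hN]
  congr 1
  exact (quotientQuotientEquivQuotient _ _ le_sup_left).length_eq

end Length

section MapLength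

variable {R S : Type*} [CommRing R] [IsLocalRing R] [CommRing S] (f : R →+* S)

theorem length_quotient_map_le_add {J : Ideal R} {x : R}
    (hx : maximalIdeal R ≤ torsionOf R (R ⧸ J) (Ideal.Quotient.mk J x)) :
    length S (S ⧸ J.map f) ≤
      length S (S ⧸ (J ⊔ Ideal.span {x}).map f) + length S (S ⧸ (maximalIdeal R).map f) := by
  have hkill : (maximalIdeal R).map f ≤ torsionOf S (S ⧸ J.map f) (Ideal.Quotient.mk _ (f x)) := by
    refine map_le_iff_le_comap.mpr fun a ha => ?_
    have hax : a * x ∈ J := Ideal.Quotient.eq_zero_iff_mem.mp (hx ha)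
    rw [Ideal.mem_comap, mem_torsionOf_iff]
    exact Ideal.Quotient.eq_zero_iff_mem.mpr
      (by simpa only [smul_eq_mul, map_mul] using mem_map_of_mem f hax)
  rw [length_quotient_eq_length_span_add (J.map f) (f x), add_comm, Ideal.map_sup,
    Ideal.map_span, Set.image_singleton]
  gcongr
  exact length_span_singleton_le hkill

theorem length_quotient_map_le_mul {J : Ideal R} (hJ : IsFiniteLength R (R ⧸ J)) :
    length S (S ⧸ J.map f) ≤ length R (R ⧸ J) * length S (S ⧸ (maximalIdeal R).map f) := by
  obtain ⟨n, hn⟩ := ENat.ne_top_iff_exists.mp (length_ne_top_iff.mpr hJ)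
  induction n generalizing J with
  | zero =>
    have : J = ⊤ := Ideal.Quotient.subsingleton_iff.mp (length_eq_zero_iff.mp hn.symm)
    simp [this, Ideal.map_top, length_eq_zero]
  | succ n ih =>
    have : Nontrivial (R ⧸ J) := length_pos_iff.mp (by rw [← hn]; exact_mod_cast n.succ_pos)
    have : IsArtinian R (R ⧸ J) := (isFiniteLength_iff_isNoetherian_isArtinian.mp hJ).2
    obtain ⟨y, hy⟩ := exists_isAtom_span_singleton R (R ⧸ J)
    obtain ⟨x, rfl⟩ := Ideal.Quotient.mk_surjective y
    have : IsSimpleModule R (span R {Ideal.Quotient.mk J x}) := isSimpleModule_iff_isAtom.mpr hy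
    have hlen : length R (R ⧸ J) = length R (R ⧸ (J ⊔ Ideal.span {x})) + 1 := by
      rw [length_quotient_eq_length_span_add J x, length_eq_one, add_comm]
    have hn' : (n : ℕ∞) = length R (R ⧸ (J ⊔ Ideal.span {x})) := by
      rw [hlen, Nat.cast_succ] at hn
      exact WithTop.add_right_cancel ENat.one_ne_top hn
    have hJ' : IsFiniteLength R (R ⧸ (J ⊔ Ideal.span {x})) :=
      length_ne_top_iff.mp (hn' ▸ ENat.natCast_ne_top n)
    calc length S (S ⧸ J.map f)
        ≤ length S (S ⧸ (J ⊔ Ideal.span {x}).map f) + length S (S ⧸ (maximalIdeal R).map f) :=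
          length_quotient_map_le_add f (torsionOf_eq_maximalIdeal_of_isAtom hy).ge
      _ ≤ n * length S (S ⧸ (maximalIdeal R).map f) + length S (S ⧸ (maximalIdeal R).map f) := by
          rw [hn']
          gcongr
          exact ih hJ' hn'
      _ = length R (R ⧸ J) * length S (S ⧸ (maximalIdeal R).map f) := by
          rw [← hn, Nat.cast_succ, add_mul, one_mul]

end MapLength

section LocalEndomorphism

variable {R : Type*} [CommRing R] [IsNoetherianRing R] [IsLocalRing R] {φ : R →+* R}
  (hφ : ((maximalIdeal R).map φ).radical = maximalIdeal R)

include hφ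

theorem isFiniteLength_quotient_map_pow (n : ℕ) :
    IsFiniteLength R (R ⧸ (maximalIdeal R).map (φ ^ n)) :=
  isFiniteLength_quotient_of_radical_eq_maximalIdeal (radical_map_pow_eq_self hφ n)

theorem flen_quotient_map_pow_pos (n : ℕ) : 0 < flen R (R ⧸ (maximalIdeal R).map (φ ^ n)) := by
  have hle : (maximalIdeal R).map (φ ^ n) ≤ maximalIdeal R :=
    le_radical.trans (radical_map_pow_eq_self hφ n).le
  have : Nontrivial (R ⧸ (maximalIdeal R).map (φ ^ n)) :=
    Ideal.Quotient.nontrivial_iff.mpr (ne_top_of_le_ne_top (maximalIdeal.isMaximal R).ne_top hle)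
  exact flen_pos (isFiniteLength_quotient_map_pow hφ n)

theorem flen_quotient_map_pow_add_le (n k : ℕ) :
    flen R (R ⧸ (maximalIdeal R).map (φ ^ (n + k))) ≤
      flen R (R ⧸ (maximalIdeal R).map (φ ^ n)) * flen R (R ⧸ (maximalIdeal R).map (φ ^ k)) := by
  have hle := length_quotient_map_le_mul (φ ^ n) (isFiniteLength_quotient_map_pow hφ k)
  rw [Ideal.map_map, ← RingHom.mul_def, ← pow_add, mul_comm] at hle
  simp only [flen_eq_toNat_length, ← ENat.toNat_mul]
  exact ENat.toNat_le_toNat hle (WithTop.mul_ne_top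
    (length_ne_top_iff.mpr (isFiniteLength_quotient_map_pow hφ n))
    (length_ne_top_iff.mpr (isFiniteLength_quotient_map_pow hφ k)))

end LocalEndomorphism

theorem subadditive_log_of_submultiplicative {a : ℕ → ℕ} (ha : ∀ n, 0 < a n)
    (h : ∀ m n, a (m + n) ≤ a m * a n) : Subadditive fun n => Real.log (a n) := fun m n => by
  rw [← Real.log_mul (by positivity [ha m]) (by positivity [ha n])]
  exact Real.log_le_log (by exact_mod_cast ha _) (by exact_mod_cast h m n)

theorem Subadditive.exists_nonneg_tendsto {u : ℕ → ℝ} (hu : Subadditive u) (h0 : ∀ n, 0 ≤ u n) :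
    ∃ h : ℝ, 0 ≤ h ∧ Tendsto (fun n => u n / n) atTop (nhds h) := by
  have hdiv : ∀ n : ℕ, 0 ≤ u n / n := fun n => div_nonneg (h0 n) n.cast_nonneg
  have hlim := hu.tendsto_lim ⟨0, Set.forall_mem_range.mpr hdiv⟩
  exact ⟨hu.lim, ge_of_tendsto' hlim hdiv, hlim⟩

theorem local_entropy_exists_general {R : Type*} [CommRing R] [IsNoetherianRing R] [IsLocalRing R]
    (φ : R →+* R)
    (hφ : (Ideal.map φ (maximalIdeal R)).radical = maximalIdeal R) :
    (∀ n k : ℕ, 1 ≤ n → 1 ≤ k →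
        Real.log (flen R (R ⧸ Ideal.map (φ ^ (n + k)) (maximalIdeal R))) ≤
          Real.log (flen R (R ⧸ Ideal.map (φ ^ n) (maximalIdeal R))) +
          Real.log (flen R (R ⧸ Ideal.map (φ ^ k) (maximalIdeal R)))) ∧
    ∃ h : ℝ, 0 ≤ h ∧ Tendsto (entSeq R φ) atTop (nhds h) := by
  have hsub := subadditive_log_of_submultiplicative (flen_quotient_map_pow_pos hφ)
    (flen_quotient_map_pow_add_le hφ)
  exact ⟨fun n k _ _ => hsub n k, hsub.exists_nonneg_tendsto fun n => Real.log_natCast_nonneg _⟩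

/-- For a finite-length local endomorphism `φ` of a Noetherian local ring `(R,m)`,
the sequence `aₙ = log length_R (R/φⁿ(m)R)` is subadditive, and consequently the limit
`h_loc(φ) = lim (1/n) aₙ` exists and is a nonnegative real number. -/
theorem local_entropy_exists {R : Type*} [CommRing R] [IsNoetherianRing R] [IsLocalRing R]
    (φ : R →+* R) [IsLocalHom φ]
    (hφ : (Ideal.map φ (maximalIdeal R)).radical = maximalIdeal R) :
    (∀ n k : ℕ, 1 ≤ n → 1 ≤ k →
        Real.log (flen R (R ⧸ Ideal.map (φ ^ (n + k)) (maximalIdeal R))) ≤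
          Real.log (flen R (R ⧸ Ideal.map (φ ^ n) (maximalIdeal R))) +
          Real.log (flen R (R ⧸ Ideal.map (φ ^ k) (maximalIdeal R)))) ∧
    ∃ h : ℝ, 0 ≤ h ∧ Tendsto (entSeq R φ) atTop (nhds h) :=
  local_entropy_exists_general φ hφ
end

section
/- The endomorphism of the formal power series ring (ℤ/2ℤ)⟦x,y,w,s⟧ determined by x ↦ x³+s³, y ↦ y³, w ↦ w⁵+x², s ↦ xs² is of finite length: the ideal (x³+s³, y³, w⁵+x², xs²) has radical equal to the maximal ideal (x,y,w,s). -/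
open IsLocalRing MvPowerSeries

/-! Modulo the ideal `I = (x³+s³, y³, w⁵+x², xs²)` one has `s⁵ = s²(x³+s³) - x²·xs²`, then
`x³ ≡ -s³`, `y³ ≡ 0` and `w⁵ ≡ -x²`, so every variable is nilpotent modulo `I`. Since the
variables generate the maximal ideal of a power series ring in finitely many variables, the
radical of `I` is the maximal ideal. -/

namespace MvPowerSeries

variable {σ R : Type*} [CommRing R]

theorem mem_span_X_image_of_coeff_eq_zero (s : Finset σ) {f : MvPowerSeries σ R}
    (hf : ∀ d : σ →₀ ℕ, (∀ i ∈ s, d i = 0) → coeff d f = 0) :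
    f ∈ Ideal.span (X '' s) := by
  classical
  induction s using Finset.induction_on generalizing f with
  | empty =>
    obtain rfl : f = 0 := ext fun d => hf d (by simp)
    exact zero_mem _
  | insert a s _ ih =>
    -- `r` keeps the terms of `f` not divisible by `X a`
    let r : MvPowerSeries σ R := fun d => if d a = 0 then coeff d f else 0
    have hr : r ∈ Ideal.span (X '' s) := ih fun d hd => by
      change (if d a = 0 then coeff d f else 0) = 0
      split_ifs with ha
      · exact hf d (by simpa [ha] using hd)
      · rfl
    obtain ⟨q, hq⟩ : X a ∣ f - r := X_dvd_iff.mpr fun d hd => by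
      change coeff d f - (if d a = 0 then coeff d f else 0) = 0
      rw [if_pos hd, sub_self]
    rw [show f = X a * q + r by rw [← hq]; ring]
    refine add_mem (Ideal.mul_mem_right _ _ (Ideal.subset_span ⟨a, by simp, rfl⟩)) ?_
    exact Ideal.span_mono (Set.image_mono (by simp)) hr

theorem ker_constantCoeff_eq_span_range_X [Finite σ] :
    RingHom.ker (constantCoeff (σ := σ) (R := R)) = Ideal.span (Set.range X) := by
  cases nonempty_fintype σ
  refine le_antisymm (fun f hf => ?_) (Ideal.span_le.mpr ?_)
  · rw [← Set.image_univ, ← Finset.coe_univ]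
    refine mem_span_X_image_of_coeff_eq_zero _ fun d hd => ?_
    obtain rfl : d = 0 := Finsupp.ext fun i => hd i (Finset.mem_univ i)
    simpa using hf
  · rintro _ ⟨i, rfl⟩
    simp

theorem maximalIdeal_eq_ker_constantCoeff {k : Type*} [Field k] :
    maximalIdeal (MvPowerSeries σ k) = RingHom.ker constantCoeff := by
  ext f
  simp [mem_maximalIdeal, mem_nonunits_iff, isUnit_iff_constantCoeff]

end MvPowerSeries

theorem span_le_radical_span_images_of_endomorphism {R : Type*} [CommRing R] (x y w s : R) :
    Ideal.span {x, y, w, s} ≤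
      (Ideal.span {x ^ 3 + s ^ 3, y ^ 3, w ^ 5 + x ^ 2, x * s ^ 2}).radical := by
  set I := Ideal.span {x ^ 3 + s ^ 3, y ^ 3, w ^ 5 + x ^ 2, x * s ^ 2}
  have gen : ∀ g ∈ ({x ^ 3 + s ^ 3, y ^ 3, w ^ 5 + x ^ 2, x * s ^ 2} : Set R), g ∈ I.radical :=
    fun g hg => Ideal.le_radical (Ideal.subset_span hg)
  clear_value I
  have hs : s ∈ I.radical := Ideal.mem_radical_of_pow_mem (m := 5) <| by
    rw [show s ^ 5 = s ^ 2 * (x ^ 3 + s ^ 3) - x ^ 2 * (x * s ^ 2) by ring]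
    exact sub_mem (Ideal.mul_mem_left _ _ (gen _ (by simp)))
      (Ideal.mul_mem_left _ _ (gen _ (by simp)))
  have hx : x ∈ I.radical := Ideal.mem_radical_of_pow_mem (m := 3) <| by
    rw [show x ^ 3 = (x ^ 3 + s ^ 3) - s ^ 3 by ring]
    exact sub_mem (gen _ (by simp)) (Ideal.pow_mem_of_mem _ hs 3 (by norm_num))
  have hy : y ∈ I.radical := Ideal.mem_radical_of_pow_mem (m := 3) (gen _ (by simp))
  have hw : w ∈ I.radical := Ideal.mem_radical_of_pow_mem (m := 5) <| by
    rw [show w ^ 5 = (w ^ 5 + x ^ 2) - x ^ 2 by ring]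
    exact sub_mem (gen _ (by simp)) (Ideal.pow_mem_of_mem _ hx 2 (by norm_num))
  rw [Ideal.span_le]
  rintro _ (rfl | rfl | rfl | rfl)
  exacts [hx, hy, hw, hs]

/-- In `T = (ℤ/2ℤ)⟦x,y,w,s⟧` (with `x = X 0`, `y = X 1`, `w = X 2`, `s = X 3`),
the ideal `(x³+s³, y³, w⁵+x², xs²)` has radical equal to the maximal ideal `(x,y,w,s)`; hence
the endomorphism determined by `x ↦ x³+s³, y ↦ y³, w ↦ w⁵+x², s ↦ xs²` is of finite length. -/
theorem example_endomorphism_finite_length :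
    (Ideal.span {(X 0 : MvPowerSeries (Fin 4) (ZMod 2)) ^ 3 + X 3 ^ 3,
        X 1 ^ 3, X 2 ^ 5 + X 0 ^ 2, X 0 * X 3 ^ 2}).radical =
      maximalIdeal (MvPowerSeries (Fin 4) (ZMod 2)) := by
  have hmax := maximalIdeal_eq_ker_constantCoeff (σ := Fin 4) (k := ZMod 2)
  refine le_antisymm ?_ ?_
  · rw [(maximalIdeal.isMaximal _).isPrime.radical_le_iff, hmax, Ideal.span_le]
    rintro g (rfl | rfl | rfl | rfl) <;> simp
  · calc maximalIdeal _ = Ideal.span (Set.range X) := hmax.trans ker_constantCoeff_eq_span_range_X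
      _ ≤ Ideal.span {X 0, X 1, X 2, X 3} :=
        Ideal.span_mono <| Set.range_subset_iff.mpr fun i => by fin_cases i <;> simp
      _ ≤ _ := span_le_radical_span_images_of_endomorphism _ _ _ _
end

section
/- Let R = (ℤ/2ℤ)⟦y⟧ with φ(y) = y³, S = (ℤ/2ℤ)⟦x,y,w,s⟧/(s⁶, y³+x²) with ψ induced by x ↦ x³+s³, y ↦ y³, w ↦ w⁵+x², s ↦ xs², and f : R → S the continuous (ℤ/2ℤ)-algebra homomorphism with f(y) = y. Then f is a flat local homomorphism and satisfies f ∘ φ = ψ ∘ f. -/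
/-!
Write `S = k⟦x,y,w,s⟧/(s⁶, y³ + x²)`. Since `k⟦y⟧` is a discrete valuation ring with
uniformizer `y`, flatness of `f` amounts to `y` being a nonzerodivisor on `S`. This holds because
`y, s⁶, x²` is a regular sequence in `k⟦x,y,w,s⟧` (a computation with monomials) and
`y³ + x² ≡ x² (mod y)`.

Both `f ∘ φ` and `ψ ∘ f` send `y` to `y³`, so they agree on polynomials, hence on every power
series modulo `y³ⁿ S` for all `n`; and `⋂ₙ y³ⁿ S = 0` by Krull's intersection theorem for the
finite module `S` over the Noetherian ring `k⟦x,y,w,s⟧`.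
-/

open MvPowerSeries

/-- If `y, u, v` is a regular sequence and `w ≡ v (mod y)`, then `y` is a nonzerodivisor
modulo `(u, w)`. -/
theorem Ideal.Quotient.isLeftRegular_mk_span_pair {A : Type*} [CommRing A] {y u v w : A}
    (hy : IsLeftRegular y) (hu : ∀ a, y ∣ u * a → y ∣ a)
    (huv : ∀ a b, y ∣ u * a + v * b → ∃ c d, b = u * c + y * d) (hvw : y ∣ w - v) :
    IsLeftRegular (Ideal.Quotient.mk (Ideal.span {u, w}) y) := by
  rw [isLeftRegular_iff_right_eq_zero_of_mul]
  intro x hx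
  obtain ⟨F, rfl⟩ := Ideal.Quotient.mk_surjective x
  rw [← map_mul, Ideal.Quotient.eq_zero_iff_mem] at hx
  rw [Ideal.Quotient.eq_zero_iff_mem]
  obtain ⟨t, ht⟩ := hvw
  obtain ⟨a, b, hab⟩ := Ideal.mem_span_pair.1 hx
  obtain ⟨c, d, rfl⟩ := huv a b ⟨F - t * b, by linear_combination hab - b * ht⟩
  obtain ⟨e, he⟩ := hu (a + v * c) ⟨F - t * u * c - t * y * d - v * d, by
    linear_combination hab - (u * c + y * d) * ht⟩
  refine Ideal.mem_span_pair.2 ⟨e + t * c, d, hy ?_⟩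
  linear_combination hab - u * he - u * c * ht

namespace MvPowerSeries

variable {σ R : Type*}

theorem coeff_single_add_X_pow_mul [CommSemiring R] (i : σ) (n : ℕ) (m : σ →₀ ℕ)
    (φ : MvPowerSeries σ R) :
    coeff (Finsupp.single i n + m) (X i ^ n * φ) = coeff m φ := by
  rw [X_pow_eq, coeff_add_monomial_mul, one_mul]

theorem X_dvd_of_X_dvd_X_pow_mul [CommSemiring R] {i j : σ} (hij : i ≠ j) {n : ℕ}
    {φ : MvPowerSeries σ R} (h : X i ∣ X j ^ n * φ) : X i ∣ φ := by
  rw [X_dvd_iff] at h ⊢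
  intro m hm
  rw [← coeff_single_add_X_pow_mul j n]
  exact h _ (by simp [hij.symm, hm])

theorem exists_eq_X_pow_mul_add_X_mul [CommRing R] {i j : σ} {n : ℕ} {φ : MvPowerSeries σ R}
    (hφ : ∀ m : σ →₀ ℕ, m i = 0 → m j < n → coeff m φ = 0) :
    ∃ c d, φ = X j ^ n * c + X i * d := by
  classical
  let ψ : MvPowerSeries σ R := fun m => if m i = 0 then coeff m φ else 0
  obtain ⟨c, hc⟩ : X j ^ n ∣ ψ := X_pow_dvd_iff.2 fun m hm => by
    change ite _ _ _ = _
    split_ifs with hmi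
    · exact hφ m hmi hm
    · rfl
  obtain ⟨d, hd⟩ : X i ∣ φ - ψ := X_dvd_iff.2 fun m hm => by
    change coeff m φ - ite _ _ _ = _
    rw [if_pos hm, sub_self]
  exact ⟨c, d, by rw [← hc, ← hd, add_sub_cancel]⟩

theorem exists_eq_X_pow_mul_add_X_mul_of_X_dvd [CommRing R] {i j k : σ} (hik : i ≠ k)
    (hjk : j ≠ k) {n p : ℕ} {φ ψ : MvPowerSeries σ R} (h : X i ∣ X j ^ n * φ + X k ^ p * ψ) :
    ∃ c d, ψ = X j ^ n * c + X i * d := by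
  refine exists_eq_X_pow_mul_add_X_mul fun m hmi hmj => ?_
  have hj : coeff (Finsupp.single k p + m) (X j ^ n * φ) = 0 :=
    X_pow_dvd_iff.1 (dvd_mul_right _ _) _ (by simpa [hjk.symm] using hmj)
  have hi := X_dvd_iff.1 h (Finsupp.single k p + m) (by simp [hik.symm, hmi])
  rwa [map_add, hj, zero_add, coeff_single_add_X_pow_mul] at hi

theorem X_mem_jacobson_bot [CommRing R] (i : σ) :
    (X i : MvPowerSeries σ R) ∈ Ideal.jacobson ⊥ :=
  Ideal.mem_jacobson_bot.2 fun φ => isUnit_iff_constantCoeff.2 (by simp)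

theorem isLeftRegular_X [CommRing R] (i : σ) : IsLeftRegular (X i : MvPowerSeries σ R) :=
  (isRegular_iff_mem_nonZeroDivisors.2 (X_mem_nonzeroDivisors (R := R) (i := i))).left

end MvPowerSeries

theorem eq_zero_of_forall_eq_pow_smul {A M : Type*} [CommRing A] [IsNoetherianRing A]
    [AddCommGroup M] [Module A M] [Module.Finite A M] {a : A} (ha : a ∈ Ideal.jacobson ⊥)
    {x : M} (hx : ∀ n : ℕ, ∃ y : M, x = a ^ n • y) : x = 0 := by
  have hJ : Ideal.span {a} ≤ Ideal.jacobson ⊥ := (Ideal.span_singleton_le_iff_mem _).2 ha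
  rw [← Submodule.mem_bot A, ← Ideal.iInf_pow_smul_eq_bot_of_le_jacobson _ hJ, Submodule.mem_iInf]
  intro n
  obtain ⟨y, rfl⟩ := hx n
  rw [Ideal.span_singleton_pow]
  exact Submodule.smul_mem_smul (Ideal.mem_span_singleton_self _) Submodule.mem_top

theorem Ideal.Quotient.eq_zero_of_forall_pow_dvd {A : Type*} [CommRing A] [IsNoetherianRing A]
    {I : Ideal A} {a : A} (ha : a ∈ Ideal.jacobson ⊥) {x : A ⧸ I}
    (hx : ∀ n : ℕ, Ideal.Quotient.mk I a ^ n ∣ x) : x = 0 :=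
  eq_zero_of_forall_eq_pow_smul ha fun n => by
    obtain ⟨y, hy⟩ := hx n
    exact ⟨y, by rw [hy, Algebra.smul_def, map_pow]; rfl⟩

open PowerSeries in
theorem PowerSeries.ringHom_ext_of_forall_pow_dvd {K S : Type*} [CommRing K] [CommRing S]
    {g h : K⟦X⟧ →+* S} (hC : g.comp C = h.comp C) (hX : g X = h X)
    (hsep : ∀ s : S, (∀ n : ℕ, g X ^ n ∣ s) → s = 0) : g = h := by
  have hpoly : g.comp Polynomial.coeToPowerSeries.ringHom =
      h.comp Polynomial.coeToPowerSeries.ringHom :=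
    Polynomial.ringHom_ext (fun a => by simpa using congr($hC a)) (by simpa using hX)
  ext F
  refine sub_eq_zero.1 (hsep _ fun n => ?_)
  set G : K⟦X⟧ := mk fun i ↦ coeff (i + n) F
  have htrunc : g (F.trunc n) = h (F.trunc n) := congr($hpoly (F.trunc n))
  refine ⟨g G - h G, ?_⟩
  conv_lhs => rw [eq_X_pow_mul_shift_add_trunc n F]
  rw [map_add, map_add, map_mul, map_mul, map_pow, map_pow, htrunc, ← hX]
  ring

theorem IsDiscreteValuationRing.flat_of_isSMulRegular {R M : Type*} [CommRing R] [IsDomain R]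
    [IsDiscreteValuationRing R] [AddCommGroup M] [Module R M] {ϖ : R} (hϖ : Irreducible ϖ)
    (h : IsSMulRegular M ϖ) : Module.Flat R M := by
  have : Module.IsTorsionFree R M := ⟨fun r hr => by
    obtain ⟨n, u, rfl⟩ := eq_unit_mul_pow_irreducible hr.ne_zero hϖ
    exact (u.isSMulRegular M).mul (h.pow n)⟩
  infer_instance

theorem RingHom.flat_of_isLeftRegular {R S : Type*} [CommRing R] [IsDomain R]
    [IsDiscreteValuationRing R] [CommRing S] (f : R →+* S) {ϖ : R} (hϖ : Irreducible ϖ)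
    (h : IsLeftRegular (f ϖ)) : f.Flat := by
  algebraize [f]
  exact IsDiscreteValuationRing.flat_of_isSMulRegular hϖ ((isSMulRegular_algebraMap_iff S).1 h)

theorem isLeftRegular_mk_X_one {K : Type*} [CommRing K] :
    IsLeftRegular (Ideal.Quotient.mk
      (Ideal.span {(X 3 : MvPowerSeries (Fin 4) K) ^ 6, X 1 ^ 3 + X 0 ^ 2}) (X 1)) :=
  Ideal.Quotient.isLeftRegular_mk_span_pair (v := X 0 ^ 2) (isLeftRegular_X 1)
    (fun _ => X_dvd_of_X_dvd_X_pow_mul (by decide))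
    (fun _ _ => exists_eq_X_pow_mul_add_X_mul_of_X_dvd (by decide) (by decide))
    ⟨X 1 ^ 2, by ring⟩

theorem example_flat_morphism_general
    (I : Ideal (MvPowerSeries (Fin 4) (ZMod 2)))
    (hI : I = Ideal.span {(X 3 : MvPowerSeries (Fin 4) (ZMod 2)) ^ 6, X 1 ^ 3 + X 0 ^ 2})
    (φ : PowerSeries (ZMod 2) →+* PowerSeries (ZMod 2))
    (hφX : φ PowerSeries.X = PowerSeries.X ^ 3)
    (ψ : (MvPowerSeries (Fin 4) (ZMod 2) ⧸ I) →+* (MvPowerSeries (Fin 4) (ZMod 2) ⧸ I))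
    (hy : ψ (Ideal.Quotient.mk I (X 1)) = Ideal.Quotient.mk I (X 1 ^ 3))
    (f : PowerSeries (ZMod 2) →+* (MvPowerSeries (Fin 4) (ZMod 2) ⧸ I))
    (hfX : f PowerSeries.X = Ideal.Quotient.mk I (X 1)) :
    f.Flat ∧ f.comp φ = ψ.comp f := by
  subst hI
  have hfφX : (f.comp φ) PowerSeries.X = Ideal.Quotient.mk _ (X 1 ^ 3) := by
    rw [RingHom.comp_apply, hφX, map_pow, hfX, map_pow]
  have hψfX : (ψ.comp f) PowerSeries.X = Ideal.Quotient.mk _ (X 1 ^ 3) := by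
    rw [RingHom.comp_apply, hfX, hy]
  have hjac : (X 1 ^ 3 : MvPowerSeries (Fin 4) (ZMod 2)) ∈ Ideal.jacobson ⊥ :=
    Ideal.pow_mem_of_mem _ (X_mem_jacobson_bot 1) 3 three_pos
  refine ⟨f.flat_of_isLeftRegular PowerSeries.X_irreducible (hfX ▸ isLeftRegular_mk_X_one),
    PowerSeries.ringHom_ext_of_forall_pow_dvd (RingHom.ext_zmod _ _) (hfφX.trans hψfX.symm)
      fun s hs => Ideal.Quotient.eq_zero_of_forall_pow_dvd hjac ?_⟩
  rwa [hfφX] at hs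

/-- Let `R = (ℤ/2ℤ)⟦y⟧` with `φ(y) = y³`, let
`S = (ℤ/2ℤ)⟦x,y,w,s⟧/(s⁶, y³+x²)` (with `x = X 0`, `y = X 1`, `w = X 2`, `s = X 3`) with `ψ`
induced by `x ↦ x³+s³, y ↦ y³, w ↦ w⁵+x², s ↦ xs²`, and let `f : R → S` be the continuous
(i.e. local) `(ℤ/2ℤ)`-algebra homomorphism with `f(y) = y`. Then `f` is a flat local
homomorphism and satisfies `f ∘ φ = ψ ∘ f`. -/
theorem example_flat_morphism
    (I : Ideal (MvPowerSeries (Fin 4) (ZMod 2)))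
    (hI : I = Ideal.span {(X 3 : MvPowerSeries (Fin 4) (ZMod 2)) ^ 6, X 1 ^ 3 + X 0 ^ 2})
    (φ : PowerSeries (ZMod 2) →+* PowerSeries (ZMod 2)) [IsLocalHom φ]
    (hφX : φ PowerSeries.X = PowerSeries.X ^ 3)
    (ψ : (MvPowerSeries (Fin 4) (ZMod 2) ⧸ I) →+* (MvPowerSeries (Fin 4) (ZMod 2) ⧸ I))
    [IsLocalHom ψ]
    (hx : ψ (Ideal.Quotient.mk I (X 0)) = Ideal.Quotient.mk I (X 0 ^ 3 + X 3 ^ 3))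
    (hy : ψ (Ideal.Quotient.mk I (X 1)) = Ideal.Quotient.mk I (X 1 ^ 3))
    (hw : ψ (Ideal.Quotient.mk I (X 2)) = Ideal.Quotient.mk I (X 2 ^ 5 + X 0 ^ 2))
    (hs : ψ (Ideal.Quotient.mk I (X 3)) = Ideal.Quotient.mk I (X 0 * X 3 ^ 2))
    (f : PowerSeries (ZMod 2) →+* (MvPowerSeries (Fin 4) (ZMod 2) ⧸ I)) [IsLocalHom f]
    (hfX : f PowerSeries.X = Ideal.Quotient.mk I (X 1)) :
    f.Flat ∧ f.comp φ = ψ.comp f :=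
  example_flat_morphism_general I hI φ hφX ψ hy f hfX
end
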